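/- arXiv:2006.14954 — 2 statements merged into one kernel-verified Lean document; each statement's English description precedes it below -/
import Mathlib

section
/- Let K be a field, V a K-vector space of finite dimension n, and f : V → V a bijective K-linear endomorphism that is diagonalizable, i.e., the eigenspaces of f span V. For each μ ∈ K let a_μ denote the dimension of the μ-eigenspace of f. Then for every t ∈ K, the t-eigenspace of the induced endomorphism ⋀³f of the exterior cube ⋀³V satisfies 6 · dim (t-eigenspace of ⋀³f) ≤ n · ∑_μ a_μ² (the sum over the finitely many eigenvalues μ of f). -/
/-!
An eigenbasis `b` of `f`, with eigenvalues `c i`, induces the basis of `⋀³V` by the wedges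
`b i ∧ b j ∧ b k` (`i < j < k`), which is an eigenbasis of `⋀³f` with eigenvalues `c i c j c k`.
So the `t`-eigenspace of `⋀³f` has dimension the number of `3`-subsets with product `t`, a sixth
of the number of ordered triples with product `t`. Once the first entry `i` of a triple is
fixed, the other two have product `u = t / c i`, and there are `∑_μ a_μ a_{u/μ} ≤ ∑_μ a_μ²` such
pairs by AM-GM, because `μ ↦ u / μ` is injective on the eigenvalues, which are nonzero.
-/

/-- The linear map between `n`-th exterior powers induced functorially by a linear map
`f : M →ₗ[R] N` (the restriction of `ExteriorAlgebra.map f`). -/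
noncomputable def exteriorPower.mapOld {R M N : Type*} [CommRing R] [AddCommGroup M] [Module R M]
    [AddCommGroup N] [Module R N] (n : ℕ) (f : M →ₗ[R] N) :
    ⋀[R]^n M →ₗ[R] ⋀[R]^n N :=
  have key : ∀ m : ℕ, Submodule.map (ExteriorAlgebra.map f).toLinearMap (⋀[R]^m M) ≤ ⋀[R]^m N := by
    intro m
    rw [Submodule.map_pow, ExteriorAlgebra.ι_range_map_map]
    have h1 : Submodule.map (ExteriorAlgebra.ι R) (LinearMap.range f)
        ≤ LinearMap.range (ExteriorAlgebra.ι R (M := N)) := LinearMap.map_le_range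
    induction m with
    | zero => simp
    | succ m ih =>
        calc Submodule.map (ExteriorAlgebra.ι R) (LinearMap.range f) ^ (m + 1)
            = Submodule.map (ExteriorAlgebra.ι R) (LinearMap.range f) ^ m *
              Submodule.map (ExteriorAlgebra.ι R) (LinearMap.range f) := pow_succ _ m
          _ ≤ LinearMap.range (ExteriorAlgebra.ι R (M := N)) ^ m *
              LinearMap.range (ExteriorAlgebra.ι R (M := N)) := mul_le_mul' ih h1
          _ = ⋀[R]^(m + 1) N := (pow_succ _ m).symm
  (ExteriorAlgebra.map f).toLinearMap.restrict
    fun x hx => key n (Submodule.mem_map_of_mem hx)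

open Module Finset
open scoped Nat

theorem exteriorPower.mapOld_eq_map {R M N : Type*} [CommRing R] [AddCommGroup M] [Module R M]
    [AddCommGroup N] [Module R N] (n : ℕ) (f : M →ₗ[R] N) :
    exteriorPower.mapOld n f = exteriorPower.map n f := by
  ext m
  simp only [LinearMap.compAlternatingMap_apply, exteriorPower.map_apply_ιMulti]
  exact ExteriorAlgebra.map_apply_ιMulti f m

section Eigenbasis

variable {K W ι : Type*} [Field K] [AddCommGroup W] [Module K W]
  {g : Module.End K W} {d : ι → K}

theorem Module.Basis.eigenspace_eq_span_image (b : Basis ι K W)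
    (hb : ∀ i, g (b i) = d i • b i) (t : K) :
    g.eigenspace t = Submodule.span K (b '' {i | d i = t}) := by
  have hb' : ∀ i, b i ∈ g.eigenspace (d i) := fun i => Module.End.mem_eigenspace_iff.2 (hb i)
  refine le_antisymm (fun x hx => ?_) ?_
  · have htop : Submodule.span K (b '' {i | d i = t}) ⊔
        Submodule.span K (b '' {i | d i = t}ᶜ) = ⊤ := by
      rw [← Submodule.span_union, ← Set.image_union, Set.union_compl_self, Set.image_univ,
        b.span_eq]
    obtain ⟨y, hy, z, hz, rfl⟩ := Submodule.mem_sup.1 (htop ▸ Submodule.mem_top : x ∈ _)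
    have hzt : z ∈ g.eigenspace t := by
      simpa using sub_mem hx (Submodule.span_le.2 (by rintro _ ⟨i, rfl, rfl⟩; exact hb' i) hy)
    have hz_other : z ∈ ⨆ μ, ⨆ (_ : μ ≠ t), g.eigenspace μ := by
      refine Submodule.span_le.2 ?_ hz
      rintro _ ⟨i, hi, rfl⟩
      exact Submodule.mem_iSup_of_mem (d i) (Submodule.mem_iSup_of_mem hi (hb' i))
    have hz0 : z = 0 :=
      Submodule.disjoint_def.1 (g.eigenspaces_iSupIndep t) z hzt hz_other
    simpa [hz0] using hy
  · rw [Submodule.span_le]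
    rintro _ ⟨i, rfl, rfl⟩
    exact hb' i

theorem Module.Basis.finrank_eigenspace [Fintype ι] [DecidableEq K] (b : Basis ι K W)
    (hb : ∀ i, g (b i) = d i • b i) (t : K) :
    finrank K (g.eigenspace t) = #{i | d i = t} := by
  rw [b.eigenspace_eq_span_image hb, ← Subtype.range_coe_subtype, ← Set.range_comp,
    finrank_span_eq_card (b.linearIndependent.comp _ Subtype.val_injective),
    Fintype.card_subtype]

end Eigenbasis

theorem exteriorPower.map_basis_exteriorPower {R M ι : Type*} [CommRing R] [AddCommGroup M]
    [Module R M] [LinearOrder ι] {g : Module.End R M} {d : ι → R} (b : Basis ι R M)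
    (hb : ∀ i, g (b i) = d i • b i) (k : ℕ) (S : Set.powersetCard ι k) :
    map k g (b.exteriorPower k S) =
      (∏ j, d (Set.powersetCard.ofFinEmbEquiv.symm S j)) • b.exteriorPower k S := by
  simp only [exteriorPower.basis_apply, ιMulti_family, map_apply_ιMulti,
    ← AlternatingMap.map_smul_univ]
  congr 1
  funext j
  exact hb _

theorem Module.End.exists_basis_eigenvectors {K V : Type*} [Field K] [AddCommGroup V]
    [Module K V] [FiniteDimensional K V] {f : Module.End K V}
    (hf : ⨆ μ, f.eigenspace μ = ⊤) :
    ∃ (b : Basis (Fin (finrank K V)) K V) (c : Fin (finrank K V) → K),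
      ∀ i, f (b i) = c i • b i := by
  classical
  have hint : DirectSum.IsInternal f.eigenspace :=
    DirectSum.isInternal_submodule_of_iSupIndep_of_iSup_eq_top f.eigenspaces_iSupIndep hf
  let b := hint.collectedBasis fun μ => finBasis K (f.eigenspace μ)
  let e := b.indexEquiv (finBasis K V)
  refine ⟨b.reindex e, fun i => (e.symm i).1, fun i => ?_⟩
  rw [b.reindex_apply, ← Module.End.mem_eigenspace_iff]
  exact hint.collectedBasis_mem _ _

theorem factorial_mul_card_powersetCard_le {ι : Type*} [Fintype ι] [LinearOrder ι] {k : ℕ}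
    (P : (Fin k → ι) → Prop) [DecidablePred P]
    (hP : ∀ (j : Fin k → ι) (σ : Equiv.Perm (Fin k)), P (j ∘ σ) ↔ P j) :
    k ! * #{S : Set.powersetCard ι k | P (Set.powersetCard.ofFinEmbEquiv.symm S)} ≤
      #{j | P j} := by
  set e := fun S : Set.powersetCard ι k => Set.powersetCard.ofFinEmbEquiv.symm S
  have he : ∀ S T, Set.range (e S) = Set.range (e T) → S = T := by
    intro S T h
    ext i
    simp only [Set.powersetCard.mem_coe_iff,
      ← Set.powersetCard.mem_range_ofFinEmbEquiv_symm_iff_mem]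
    exact Set.ext_iff.1 h i
  calc k ! * #{S | P (e S)}
      = #((univ : Finset (Equiv.Perm (Fin k))) ×ˢ univ.filter fun S => P (e S)) := by
        rw [card_product, card_univ, Fintype.card_perm, Fintype.card_fin]
    _ ≤ #{j | P j} := by
      refine card_le_card_of_injOn (fun x => e x.2 ∘ x.1) ?_ ?_
      · intro x hx
        simp only [coe_product, Set.mem_prod, mem_coe, mem_filter, mem_univ, true_and] at hx ⊢
        exact (hP _ _).2 hx
      · rintro ⟨σ, S⟩ - ⟨τ, T⟩ - h
        have hST : S = T := he S T (by
          simpa only [EquivLike.range_comp] using congrArg Set.range h)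
        subst hST
        exact Prod.ext (Equiv.ext fun x => (e S).injective (congrFun h x)) rfl

theorem Finset.sum_mul_comp_le_sum_sq {α : Type*} [DecidableEq α] (T : Finset α) (a : α → ℕ)
    {g : α → α} (hg : Set.InjOn g T) (ha : ∀ x, a x ≠ 0 → x ∈ T) :
    ∑ x ∈ T, a x * a (g x) ≤ ∑ x ∈ T, a x ^ 2 := by
  have hgsq : ∑ x ∈ T, a (g x) ^ 2 ≤ ∑ x ∈ T, a x ^ 2 := by
    rw [← sum_image (f := fun x => a x ^ 2) hg]
    exact sum_le_sum_of_ne_zero fun x _ hx => ha x (by simpa using hx)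
  have hamgm : ∑ x ∈ T, 2 * (a x * a (g x)) ≤ ∑ x ∈ T, (a x ^ 2 + a (g x) ^ 2) :=
    sum_le_sum fun x _ => by rw [← mul_assoc]; exact two_mul_le_add_sq _ _
  rw [← mul_sum, sum_add_distrib] at hamgm
  omega

section EigenvalueCounting

variable {ι K : Type*} [Fintype ι] [Field K] [DecidableEq K] (c : ι → K) {T : Finset K}

theorem card_pairs_mul_eq_le (hcT : ∀ i, c i ∈ T) (hT0 : (0 : K) ∉ T) (u : K) :
    #{p : ι × ι | c p.1 * c p.2 = u} ≤ ∑ μ ∈ T, #{i | c i = μ} ^ 2 := by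
  have hc0 : ∀ i, c i ≠ 0 := fun i h => hT0 (h ▸ hcT i)
  by_cases hu : u = 0
  · simp [hu, hc0]
  have hinj : Set.InjOn (u / ·) T := fun x _ y _ h => by
    simpa [div_div_cancel₀ hu] using congrArg (u / ·) h
  calc #{p : ι × ι | c p.1 * c p.2 = u}
      = ∑ μ ∈ T, #{p ∈ {p : ι × ι | c p.1 * c p.2 = u} | c p.1 = μ} :=
        card_eq_sum_card_fiberwise fun p _ => hcT p.1
    _ = ∑ μ ∈ T, #{i | c i = μ} * #{i | c i = u / μ} := by
        refine sum_congr rfl fun μ hμ => ?_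
        have hμ0 : μ ≠ 0 := fun h => hT0 (h ▸ hμ)
        rw [← card_product]
        congr 1
        ext ⟨i, k⟩
        simp only [mem_filter, mem_product, mem_univ, true_and, eq_div_iff hμ0]
        constructor
        · rintro ⟨h, rfl⟩
          exact ⟨rfl, by rw [← h, mul_comm]⟩
        · rintro ⟨rfl, h⟩
          exact ⟨by rw [← h, mul_comm], rfl⟩
    _ ≤ ∑ μ ∈ T, #{i | c i = μ} ^ 2 :=
        sum_mul_comp_le_sum_sq T _ hinj fun ν hν => by
          obtain ⟨i, hi⟩ := card_ne_zero.1 hν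
          exact (mem_filter.1 hi).2 ▸ hcT i

theorem card_triples_prod_eq_le (hcT : ∀ i, c i ∈ T) (hT0 : (0 : K) ∉ T) (t : K) :
    #{j : Fin 3 → ι | ∏ k, c (j k) = t} ≤ Fintype.card ι * ∑ μ ∈ T, #{i | c i = μ} ^ 2 := by
  classical
  have hc0 : ∀ i, c i ≠ 0 := fun i h => hT0 (h ▸ hcT i)
  calc #{j : Fin 3 → ι | ∏ k, c (j k) = t}
      = ∑ i, #{j ∈ {j : Fin 3 → ι | ∏ k, c (j k) = t} | j 0 = i} :=
        card_eq_sum_card_fiberwise fun _ _ => mem_univ _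
    _ ≤ ∑ _i : ι, ∑ μ ∈ T, #{i | c i = μ} ^ 2 := by
        refine sum_le_sum fun i _ => le_trans ?_ (card_pairs_mul_eq_le c hcT hT0 (t / c i))
        refine card_le_card_of_injOn (fun j => (j 1, j 2)) ?_ ?_
        · intro j hj
          simp only [mem_coe, mem_filter, mem_univ, true_and, Fin.prod_univ_three] at hj ⊢
          rw [eq_div_iff (hc0 i), ← hj.1, ← hj.2]
          ring
        · intro j hj j' hj' h
          simp only [mem_coe, mem_filter, mem_univ, true_and, Prod.mk.injEq] at hj hj' h
          funext k
          fin_cases k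
          exacts [hj.2.trans hj'.2.symm, h.1, h.2]
    _ = Fintype.card ι * ∑ μ ∈ T, #{i | c i = μ} ^ 2 := by
        rw [sum_const, card_univ, smul_eq_mul]

end EigenvalueCounting

/-- Let `f` be a bijective diagonalizable endomorphism of an `n`-dimensional `K`-vector
space `V`, with eigenvalues exactly the elements of the finite set `s`, and let `a_μ` be the
dimension of the `μ`-eigenspace of `f`. Then for every `t : K`, the `t`-eigenspace of the
induced endomorphism `⋀³f` of `⋀³V` satisfies `6 · dim ≤ n · ∑_μ a_μ²`. -/
theorem stmt5 {K V : Type*} [Field K] [AddCommGroup V] [Module K V] [FiniteDimensional K V]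
    (n : ℕ) (hn : Module.finrank K V = n)
    (f : Module.End K V) (hf : Function.Bijective f)
    (hdiag : (⨆ μ : K, f.eigenspace μ) = ⊤)
    (s : Finset K) (hs : ∀ μ : K, f.HasEigenvalue μ ↔ μ ∈ s) (t : K) :
    6 * Module.finrank K (Module.End.eigenspace (exteriorPower.mapOld 3 f) t) ≤
      n * ∑ μ ∈ s, Module.finrank K (f.eigenspace μ) ^ 2 := by
  classical
  obtain ⟨b, c, hb⟩ := f.exists_basis_eigenvectors hdiag
  have hs0 : (0 : K) ∉ s := fun h => by
    obtain ⟨v, hv⟩ := ((hs 0).2 h).exists_hasEigenvector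
    exact hv.2 (hf.injective (by simpa using hv.apply_eq_smul))
  have hcs : ∀ i, c i ∈ s := fun i =>
    (hs _).1 (Module.End.hasEigenvalue_of_hasEigenvector
      ⟨Module.End.mem_eigenspace_iff.2 (hb i), b.ne_zero i⟩)
  rw [exteriorPower.mapOld_eq_map]
  calc 6 * finrank K (Module.End.eigenspace (exteriorPower.map 3 f) t)
      = 3 ! * #{S : Set.powersetCard _ 3 |
          ∏ k, c (Set.powersetCard.ofFinEmbEquiv.symm S k) = t} := by
        rw [(b.exteriorPower 3).finrank_eigenspace (exteriorPower.map_basis_exteriorPower b hb 3)]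
        rfl
    _ ≤ #{j : Fin 3 → Fin (finrank K V) | ∏ k, c (j k) = t} :=
        factorial_mul_card_powersetCard_le (fun j => ∏ k, c (j k) = t) fun j σ => by
          simp only [Function.comp_apply, Equiv.prod_comp σ fun k => c (j k)]
    _ ≤ finrank K V * ∑ μ ∈ s, #{i | c i = μ} ^ 2 := by
        simpa using card_triples_prod_eq_le c hcs hs0 t
    _ = n * ∑ μ ∈ s, finrank K (f.eigenspace μ) ^ 2 := by
        simp only [b.finrank_eigenspace hb, hn]
end

section
/- Let p be a prime, q = p^e with e ≥ 2, let a be an integer with 1 ≤ a < e, let n ≥ 2, and let L be a field extension of F_q of finite degree k ≥ 2. Consider the action of SL_n(F_q) on M_n(L) given by g : A ↦ ḡ^{-1} · A · ḡ', where ḡ is the image of g in M_n(L) under the inclusion F_q ⊆ L and ḡ' is the image in M_n(L) of the matrix g^{(p^a)} obtained from g by applying x ↦ x^{p^a} entrywise. Then this action has a regular orbit modulo its kernel: there exists A ∈ M_n(L) such that every g ∈ SL_n(F_q) with ḡ^{-1} · A · ḡ' = A acts as the identity on all of M_n(L). -/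
/-!
Take `A = ω • 1 + α • N + Nᵀ`, where `ω ∈ L \ F`, `α ∈ F` is not fixed by `σ : x ↦ x ^ p ^ a`,
and `N` is the nilpotent Jordan block. If `g` fixes `A`, then `A * ḡ' = ḡ * A`. Since `1, ω` are
linearly independent over `F`, comparing components gives `g' = g` and `g` commutes with
`α • N + Nᵀ`. Now `g`, `N`, `Nᵀ` are `σ`-fixed while `α` is not, so `g` commutes with `N` and with
`Nᵀ` separately, which forces `g` to be scalar; a scalar `g` with `g' = g` acts trivially.
-/

open Matrix

theorem Subfield.eq_and_eq_of_mul_add_eq_mul_add {L : Type*} [Field L] (K : Subfield L)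
    {ω x y x' y' : L} (hω : ω ∉ K) (hx : x ∈ K) (hy : y ∈ K) (hx' : x' ∈ K) (hy' : y' ∈ K)
    (h : ω * x + y = ω * x' + y') : x = x' ∧ y = y' := by
  obtain rfl : x = x' := by
    by_contra hne
    refine hω ?_
    have hω_eq : ω = (y' - y) / (x - x') := by
      rw [eq_div_iff (sub_ne_zero.mpr hne)]
      linear_combination h
    exact hω_eq ▸ K.div_mem (K.sub_mem hy' hy) (K.sub_mem hx hx')
  exact ⟨rfl, add_left_cancel h⟩

theorem exists_notMem_fieldRange_of_one_lt_finrank {F L : Type*} [Field F] [Field L]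
    [Algebra F L] (h : 1 < Module.finrank F L) : ∃ ω : L, ω ∉ (algebraMap F L).fieldRange := by
  by_contra! hall
  have hbot : (⊥ : Subalgebra F L) = ⊤ :=
    eq_top_iff.mpr fun x _ => Algebra.mem_bot.mpr (RingHom.mem_fieldRange.mp (hall x))
  have := Subalgebra.bot_eq_top_iff_finrank_eq_one.mp hbot
  omega

theorem FiniteField.exists_pow_ne_self {F : Type*} [Field F] [Fintype F] {m : ℕ} (hm : 1 < m)
    (hmF : m < Fintype.card F) : ∃ α : F, α ^ m ≠ α := by
  by_contra! hall
  refine FiniteField.X_pow_card_sub_X_ne_zero F hm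
    (Polynomial.eq_zero_of_natDegree_lt_card_of_eval_eq_zero _ Function.injective_id
      (fun x => by simp [hall]) ?_)
  rwa [FiniteField.X_pow_card_sub_X_natDegree_eq F hm]

namespace Matrix

theorem eq_and_eq_of_smul_add_eq_smul_add {m n L : Type*} [Field L] (K : Subfield L)
    {ω : L} (hω : ω ∉ K) {X Y X' Y' : Matrix m n L} (hX : ∀ i j, X i j ∈ K)
    (hY : ∀ i j, Y i j ∈ K) (hX' : ∀ i j, X' i j ∈ K) (hY' : ∀ i j, Y' i j ∈ K)
    (h : ω • X + Y = ω • X' + Y') : X = X' ∧ Y = Y' := by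
  have hij (i j) := K.eq_and_eq_of_mul_add_eq_mul_add hω (hX i j) (hY i j) (hX' i j) (hY' i j)
    (congrFun₂ h i j)
  exact ⟨ext fun i j => (hij i j).1, ext fun i j => (hij i j).2⟩

theorem eq_and_mul_eq_of_smul_one_add_map_mul_eq {n F L : Type*} [Fintype n]
    [DecidableEq n] [Field F] [Field L] {ι : F →+* L} {ω : L} (hω : ω ∉ ι.fieldRange)
    {A G G' : Matrix n n F}
    (h : (ω • 1 + A.map ι) * G'.map ι = G.map ι * (ω • 1 + A.map ι)) :
    G' = G ∧ A * G' = G * A := by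
  rw [add_mul, mul_add, smul_mul_assoc, mul_smul_comm, one_mul, mul_one, ← Matrix.map_mul,
    ← Matrix.map_mul] at h
  have hrange (M : Matrix n n F) (i j) : M.map ι i j ∈ ι.fieldRange := ι.mem_fieldRange_self _
  obtain ⟨hG, hA⟩ := eq_and_eq_of_smul_add_eq_smul_add _ hω (hrange _) (hrange _) (hrange _)
    (hrange _) h
  exact ⟨map_injective ι.injective hG, map_injective ι.injective hA⟩

theorem commute_and_commute_of_commute_smul_add {n F : Type*} [Fintype n] [Field F]
    {σ : F →+* F} {α : F} (hα : σ α ≠ α) {G P Q : Matrix n n F} (hG : G.map σ = G)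
    (hP : P.map σ = P) (hQ : Q.map σ = Q) (h : Commute (α • P + Q) G) :
    Commute P G ∧ Commute Q G := by
  have hmul {M N : Matrix n n F} (hM : M.map σ = M) (hN : N.map σ = N) (i j) :
      (M * N) i j ∈ σ.eqLocusField (RingHom.id F) := by
    rw [RingHom.mem_eqLocusField, RingHom.id_apply, ← map_apply (f := σ), Matrix.map_mul, hM, hN]
  exact eq_and_eq_of_smul_add_eq_smul_add _ hα (hmul hP hG) (hmul hQ hG) (hmul hG hP)
    (hmul hG hQ) (by simpa only [add_mul, mul_add, smul_mul_assoc, mul_smul_comm] using h.eq)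

theorem SpecialLinearGroup.map_inv_mul_mul_eq_iff {n R S : Type*} [Fintype n]
    [DecidableEq n] [CommRing R] [CommRing S] (f : R →+* S) (g : SpecialLinearGroup n R)
    (A B : Matrix n n S) :
    (↑g⁻¹ : Matrix n n R).map f * A * B = A ↔ A * B = (↑g : Matrix n n R).map f * A := by
  have hmap (h : SpecialLinearGroup n R) : (↑h : Matrix n n R).map f = ↑(map f h) := rfl
  rw [hmap, hmap, map_inv]
  set u := map f g
  constructor
  · intro h
    calc A * B = ↑u * (↑u⁻¹ * A * B) := by
          rw [← mul_assoc, ← mul_assoc, ← coe_mul, mul_inv_cancel, coe_one, one_mul]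
      _ = ↑u * A := by rw [h]
  · intro h
    rw [mul_assoc, h, ← mul_assoc, ← coe_mul, inv_mul_cancel, coe_one, one_mul]

def upperShift (n : ℕ) (R : Type*) [Zero R] [One R] : Matrix (Fin n) (Fin n) R :=
  of fun i j => if (i : ℕ) + 1 = j then 1 else 0

section Semiring

variable {R : Type*} [Semiring R]

theorem map_upperShift {S : Type*} [Semiring S] (f : R →+* S) (n : ℕ) :
    (upperShift n R).map f = upperShift n S := by
  ext i j
  simp only [upperShift, map_apply, of_apply]
  split_ifs <;> simp

variable {m : ℕ}

theorem mul_upperShift_apply_zero {ι : Type*} (M : Matrix ι (Fin (m + 1)) R) (i : ι) :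
    (M * upperShift (m + 1) R) i 0 = 0 := by
  simp [mul_apply, upperShift]

theorem mul_upperShift_apply_succ {ι : Type*} (M : Matrix ι (Fin (m + 1)) R) (i : ι)
    (j : Fin m) : (M * upperShift (m + 1) R) i j.succ = M i j.castSucc := by
  have key (k : Fin (m + 1)) : (k : ℕ) + 1 = j.succ ↔ k = j.castSucc := by simp [Fin.ext_iff]
  simp only [mul_apply, upperShift, of_apply, key, mul_ite, mul_one, mul_zero,
    Finset.sum_ite_eq', Finset.mem_univ, if_true]

theorem upperShift_mul_apply_castSucc {ι : Type*} (M : Matrix (Fin (m + 1)) ι R) (i : Fin m)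
    (j : ι) : (upperShift (m + 1) R * M) i.castSucc j = M i.succ j := by
  have key (k : Fin (m + 1)) : (i.castSucc : ℕ) + 1 = k ↔ i.succ = k := by simp [Fin.ext_iff]
  simp only [mul_apply, upperShift, of_apply, key, ite_mul, one_mul, zero_mul,
    Finset.sum_ite_eq, Finset.mem_univ, if_true]

theorem apply_succ_zero_of_commute_upperShift {M : Matrix (Fin (m + 1)) (Fin (m + 1)) R}
    (h : Commute M (upperShift (m + 1) R)) (i : Fin m) : M i.succ 0 = 0 := by
  rw [← upperShift_mul_apply_castSucc M, ← h.eq, mul_upperShift_apply_zero]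

theorem apply_succ_succ_of_commute_upperShift {M : Matrix (Fin (m + 1)) (Fin (m + 1)) R}
    (h : Commute M (upperShift (m + 1) R)) (i j : Fin m) :
    M i.succ j.succ = M i.castSucc j.castSucc := by
  rw [← upperShift_mul_apply_castSucc M, ← h.eq, mul_upperShift_apply_succ]

end Semiring

theorem exists_eq_scalar_of_commute_upperShift {R : Type*} [CommSemiring R] {n : ℕ}
    {M : Matrix (Fin n) (Fin n) R} (h : Commute M (upperShift n R))
    (hT : Commute M (upperShift n R)ᵀ) : ∃ c, M = scalar (Fin n) c := by
  obtain _ | m := n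
  · exact ⟨0, Subsingleton.elim _ _⟩
  have hT' : Commute Mᵀ (upperShift (m + 1) R) := by
    have := congrArg transpose hT.eq
    simp only [transpose_mul, transpose_transpose] at this
    exact this.symm
  refine ⟨M 0 0, ?_⟩
  ext i j
  induction i using Fin.induction generalizing j with
  | zero =>
    cases j using Fin.cases with
    | zero => simp
    | succ j =>
      rw [scalar_apply, diagonal_apply_ne _ (Fin.succ_ne_zero j).symm]
      exact apply_succ_zero_of_commute_upperShift hT' j
  | succ i ih =>
    cases j using Fin.cases with
    | zero => simpa using apply_succ_zero_of_commute_upperShift h i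
    | succ j =>
      rw [apply_succ_succ_of_commute_upperShift h, ih]
      simp [diagonal_apply]

end Matrix

theorem stmt14_general {F L : Type*} [Field F] [Fintype F] [Field L] [Algebra F L]
    (p e a n k : ℕ) (hp : p.Prime) (hcard : Fintype.card F = p ^ e)
    (ha1 : 1 ≤ a) (hae : a < e)
    (hk : Module.finrank F L = k) (h2k : 2 ≤ k) :
    ∃ A : Matrix (Fin n) (Fin n) L,
      ∀ g : Matrix.SpecialLinearGroup (Fin n) F,
        (((g⁻¹ : Matrix.SpecialLinearGroup (Fin n) F) : Matrix (Fin n) (Fin n) F).map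
            (algebraMap F L)) * A *
          (((g : Matrix (Fin n) (Fin n) F).map (fun x => x ^ p ^ a)).map (algebraMap F L)) =
            A →
        ∀ C : Matrix (Fin n) (Fin n) L,
          (((g⁻¹ : Matrix.SpecialLinearGroup (Fin n) F) : Matrix (Fin n) (Fin n) F).map
              (algebraMap F L)) * C *
            (((g : Matrix (Fin n) (Fin n) F).map (fun x => x ^ p ^ a)).map (algebraMap F L)) =
              C := by
  have : Fact p.Prime := ⟨hp⟩
  have : CharP F p := charP_of_card_eq_prime_pow hcard
  obtain ⟨ω, hω⟩ := exists_notMem_fieldRange_of_one_lt_finrank (F := F) (L := L) (by omega)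
  obtain ⟨α, hα⟩ := FiniteField.exists_pow_ne_self (F := F) (Nat.one_lt_pow (by omega) hp.one_lt)
    (hcard ▸ Nat.pow_lt_pow_right hp.one_lt hae)
  set S := upperShift n F
  refine ⟨ω • 1 + (α • S + Sᵀ).map (algebraMap F L), fun g hg C => ?_⟩
  set σ := iterateFrobenius F p a
  rw [show (fun x : F => x ^ p ^ a) = σ from rfl, SpecialLinearGroup.map_inv_mul_mul_eq_iff]
    at hg ⊢
  obtain ⟨hfix, hcomm⟩ := eq_and_mul_eq_of_smul_one_add_map_mul_eq hω hg
  rw [hfix] at hcomm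
  obtain ⟨hS, hST⟩ := commute_and_commute_of_commute_smul_add (σ := σ) hα hfix
    (map_upperShift σ n) (by rw [transpose_map, map_upperShift]) hcomm
  obtain ⟨c, hc⟩ := exists_eq_scalar_of_commute_upperShift hS.symm hST.symm
  rw [hfix, hc, scalar_apply, diagonal_map (map_zero _), ← scalar_apply]
  exact (scalar_commute _ (fun _ => Commute.all _ _) C).eq.symm

/-- Let `F` be the field with `q = p^e` elements (`e ≥ 2`), `1 ≤ a < e`, `n ≥ 2`, and let
`L/F` be a field extension of degree `k ≥ 2`. Then the action of `SL_n(F)` on `M_n(L)` by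
`A ↦ ḡ⁻¹ · A · ḡ'` (where `ḡ` is `g` viewed over `L` and `ḡ'` is `g^{(p^a)}` viewed over `L`)
has a regular orbit modulo its kernel: some `A ∈ M_n(L)` is fixed only by elements acting as
the identity on all of `M_n(L)`. -/
theorem stmt14 {F L : Type*} [Field F] [Fintype F] [Field L] [Algebra F L]
    (p e a n k : ℕ) (hp : p.Prime) (he : 2 ≤ e) (hcard : Fintype.card F = p ^ e)
    (ha1 : 1 ≤ a) (hae : a < e) (hn : 2 ≤ n)
    (hk : Module.finrank F L = k) (h2k : 2 ≤ k) :
    ∃ A : Matrix (Fin n) (Fin n) L,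
      ∀ g : Matrix.SpecialLinearGroup (Fin n) F,
        (((g⁻¹ : Matrix.SpecialLinearGroup (Fin n) F) : Matrix (Fin n) (Fin n) F).map
            (algebraMap F L)) * A *
          (((g : Matrix (Fin n) (Fin n) F).map (fun x => x ^ p ^ a)).map (algebraMap F L)) =
            A →
        ∀ C : Matrix (Fin n) (Fin n) L,
          (((g⁻¹ : Matrix.SpecialLinearGroup (Fin n) F) : Matrix (Fin n) (Fin n) F).map
              (algebraMap F L)) * C *
            (((g : Matrix (Fin n) (Fin n) F).map (fun x => x ^ p ^ a)).map (algebraMap F L)) =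
              C :=
  stmt14_general p e a n k hp hcard ha1 hae hk h2k
end
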